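/- arXiv:2203.00984 — 3 statements merged into one kernel-verified Lean document; each statement's English description precedes it below -/
import Mathlib

section
/- Let s1 = [[1,0],[-1,1]] and s2 = [[1,1],[0,1]], let β ∈ SL(2,ℤ), and let i,j ∈ {1,2}. If the intersection of Im(s_i⁻¹ - Id) and Im(β·(s_j - Id)·β⁻¹) (as subspaces of ℚ²) is nonzero, then at least one of the four entries of the matrix β is zero. -/
open Matrix

def s1Q : Matrix (Fin 2) (Fin 2) ℚ := !![1, 0; -1, 1]
def s2Q : Matrix (Fin 2) (Fin 2) ℚ := !![1, 1; 0, 1]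

def sQ : Fin 2 → Matrix (Fin 2) (Fin 2) ℚ := ![s1Q, s2Q]

lemma auxw (w : Fin 2 → ℚ) (t : ℚ) (x : Fin 2 → ℚ) (k : Fin 2)
    (hx : ∀ m, x m = w m * t) (h0 : x k = 0) (hw : w k ≠ 0) : x = 0 := by
  have ht : t = 0 := by
    rcases mul_eq_zero.mp ((hx k) ▸ h0) with h | h
    · exact absurd h hw
    · exact h
  funext m; simp [hx m, ht]

lemma hN0 : (sQ 0)⁻¹ - 1 = !![(0:ℚ),0;1,0] := by
  show s1Q⁻¹ - 1 = _
  rw [Matrix.inv_def]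
  norm_num [Matrix.adjugate_fin_two, Matrix.det_fin_two, s1Q]
  ext k l; fin_cases k <;> fin_cases l <;> simp [s1Q, Matrix.one_apply]

lemma hN1 : (sQ 1)⁻¹ - 1 = !![(0:ℚ),-1;0,0] := by
  show s2Q⁻¹ - 1 = _
  rw [Matrix.inv_def]
  norm_num [Matrix.adjugate_fin_two, Matrix.det_fin_two, s2Q]
  ext k l; fin_cases k <;> fin_cases l <;> simp [s2Q, Matrix.one_apply]

/-- If `Im(sᵢ⁻¹ - Id) ∩ Im(β (sⱼ - Id) β⁻¹)` is a nonzero subspace of `ℚ²`,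
then some entry of `β` vanishes. -/
theorem entry_zero_of_nontrivial_intersection
    (β : Matrix.SpecialLinearGroup (Fin 2) ℤ) (i j : Fin 2)
    (B : Matrix (Fin 2) (Fin 2) ℚ)
    (hB : B = (β : Matrix (Fin 2) (Fin 2) ℤ).map (Int.cast : ℤ → ℚ))
    (h : LinearMap.range (Matrix.toLin' ((sQ i)⁻¹ - 1)) ⊓
         LinearMap.range (Matrix.toLin' (B * (sQ j - 1) * B⁻¹)) ≠ ⊥) :
    ∃ k l : Fin 2, (β : Matrix (Fin 2) (Fin 2) ℤ) k l = 0 := by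
  have hdet : B.det = 1 := by
    have hd2 := β.prop
    rw [Matrix.det_fin_two] at hd2
    rw [hB, Matrix.det_fin_two]
    simp only [Matrix.map_apply]
    exact_mod_cast hd2
  have hBinv : B⁻¹ = !![B 1 1, -(B 0 1); -(B 1 0), B 0 0] := by
    rw [Matrix.inv_def, Matrix.adjugate_fin_two, hdet]; simp
  have hcast : ∀ k l, B k l = 0 → (β : Matrix (Fin 2) (Fin 2) ℤ) k l = 0 := by
    intro k l hkl
    rw [hB, Matrix.map_apply] at hkl
    exact_mod_cast hkl
  have hM0 : B * (sQ 0 - 1) * B⁻¹ =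
      !![-(B 0 1 * B 1 1), B 0 1 * B 0 1; -(B 1 1 * B 1 1), B 0 1 * B 1 1] := by
    ext k l
    fin_cases k <;> fin_cases l <;>
      simp [Matrix.mul_apply, Fin.sum_univ_two, hBinv, sQ, s1Q, Matrix.one_apply] <;> ring
  have hM1 : B * (sQ 1 - 1) * B⁻¹ =
      !![-(B 0 0 * B 1 0), B 0 0 * B 0 0; -(B 1 0 * B 1 0), B 0 0 * B 1 0] := by
    ext k l
    fin_cases k <;> fin_cases l <;>
      simp [Matrix.mul_apply, Fin.sum_univ_two, hBinv, sQ, s2Q, Matrix.one_apply] <;> ring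
  fin_cases i <;> fin_cases j
  · -- i = 0, j = 0
    refine ⟨0, 1, hcast 0 1 ?_⟩
    by_contra hne
    apply h
    rw [Submodule.eq_bot_iff]
    rintro x ⟨⟨y, hy⟩, ⟨z, hz⟩⟩
    replace hy : Matrix.toLin' ((sQ 0)⁻¹ - 1) y = x := hy
    replace hz : Matrix.toLin' (B * (sQ 0 - 1) * B⁻¹) z = x := hz
    have hxe : ∀ m, x m = ![B 0 1, B 1 1] m * (B 0 1 * z 1 - B 1 1 * z 0) := by
      intro m
      rw [← hz, Matrix.toLin'_apply, hM0]
      fin_cases m <;>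
        simp [Matrix.mulVec, dotProduct, Fin.sum_univ_two] <;> ring
    have hx0 : x 0 = 0 := by
      rw [← hy, Matrix.toLin'_apply, hN0]
      simp [Matrix.mulVec, dotProduct, Fin.sum_univ_two]
    exact auxw _ _ x 0 hxe hx0 (by simpa using hne)
  · -- i = 0, j = 1
    refine ⟨0, 0, hcast 0 0 ?_⟩
    by_contra hne
    apply h
    rw [Submodule.eq_bot_iff]
    rintro x ⟨⟨y, hy⟩, ⟨z, hz⟩⟩
    replace hy : Matrix.toLin' ((sQ 0)⁻¹ - 1) y = x := hy
    replace hz : Matrix.toLin' (B * (sQ 1 - 1) * B⁻¹) z = x := hz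
    have hxe : ∀ m, x m = ![B 0 0, B 1 0] m * (B 0 0 * z 1 - B 1 0 * z 0) := by
      intro m
      rw [← hz, Matrix.toLin'_apply, hM1]
      fin_cases m <;>
        simp [Matrix.mulVec, dotProduct, Fin.sum_univ_two] <;> ring
    have hx0 : x 0 = 0 := by
      rw [← hy, Matrix.toLin'_apply, hN0]
      simp [Matrix.mulVec, dotProduct, Fin.sum_univ_two]
    exact auxw _ _ x 0 hxe hx0 (by simpa using hne)
  · -- i = 1, j = 0
    refine ⟨1, 1, hcast 1 1 ?_⟩
    by_contra hne
    apply h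
    rw [Submodule.eq_bot_iff]
    rintro x ⟨⟨y, hy⟩, ⟨z, hz⟩⟩
    replace hy : Matrix.toLin' ((sQ 1)⁻¹ - 1) y = x := hy
    replace hz : Matrix.toLin' (B * (sQ 0 - 1) * B⁻¹) z = x := hz
    have hxe : ∀ m, x m = ![B 0 1, B 1 1] m * (B 0 1 * z 1 - B 1 1 * z 0) := by
      intro m
      rw [← hz, Matrix.toLin'_apply, hM0]
      fin_cases m <;>
        simp [Matrix.mulVec, dotProduct, Fin.sum_univ_two] <;> ring
    have hx0 : x 1 = 0 := by
      rw [← hy, Matrix.toLin'_apply, hN1]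
      simp [Matrix.mulVec, dotProduct, Fin.sum_univ_two]
    exact auxw _ _ x 1 hxe hx0 (by simpa using hne)
  · -- i = 1, j = 1
    refine ⟨1, 0, hcast 1 0 ?_⟩
    by_contra hne
    apply h
    rw [Submodule.eq_bot_iff]
    rintro x ⟨⟨y, hy⟩, ⟨z, hz⟩⟩
    replace hy : Matrix.toLin' ((sQ 1)⁻¹ - 1) y = x := hy
    replace hz : Matrix.toLin' (B * (sQ 1 - 1) * B⁻¹) z = x := hz
    have hxe : ∀ m, x m = ![B 0 0, B 1 0] m * (B 0 0 * z 1 - B 1 0 * z 0) := by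
      intro m
      rw [← hz, Matrix.toLin'_apply, hM1]
      fin_cases m <;>
        simp [Matrix.mulVec, dotProduct, Fin.sum_univ_two] <;> ring
    have hx0 : x 1 = 0 := by
      rw [← hy, Matrix.toLin'_apply, hN1]
      simp [Matrix.mulVec, dotProduct, Fin.sum_univ_two]
    exact auxw _ _ x 1 hxe hx0 (by simpa using hne)
end

section
/- For every prime p and positive integer n, the order of the symplectic group Sp(2n, 𝔽_p) equals the product over m = 1,…,n of (p^{2m} - 1)·p^{2m-1}. -/
/-!
Rows `(A (inr i), A (inl i))` of a symplectic matrix form a symplectic basis `(eᵢ, fᵢ)` of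
`𝔽_q^{2n}` for the standard form, and conversely, so it suffices to count symplectic bases of a
nondegenerate alternating space of dimension `2n`. The first pair `(e, f)` is any pair with
`B e f = 1`: there are `q^{2n} - 1` choices of `e ≠ 0` and then `q^{2n-1}` choices of `f` on an
affine hyperplane. The remaining pairs form a symplectic basis of `{e, f}ᗮ`, which is again
nondegenerate of dimension `2n - 2`, so induction on `n` gives the product.
-/

open Module LinearMap Finset Matrix

theorem Nat.card_subtype_prod_eq_mul_of_card_fiber {α β : Type*} [Finite α] [Finite β]
    {P : α → Prop} {Q : α → β → Prop} {c : ℕ} (hQ : ∀ a, P a → Nat.card {b // Q a b} = c) :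
    Nat.card {x : α × β // P x.1 ∧ Q x.1 x.2} = Nat.card {a // P a} * c := by
  have : Fintype {a // P a} := Fintype.ofFinite _
  let e : {x : α × β // P x.1 ∧ Q x.1 x.2} ≃ Σ a : {a // P a}, {b // Q a b} :=
    { toFun x := ⟨⟨x.1.1, x.2.1⟩, ⟨x.1.2, x.2.2⟩⟩
      invFun y := ⟨(y.1.1, y.2.1), y.1.2, y.2.2⟩ }
  rw [Nat.card_congr e, Nat.card_sigma, sum_congr rfl fun a _ => hQ a.1 a.2,
    sum_const, smul_eq_mul, Finset.card_univ, Nat.card_eq_fintype_card]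

theorem Nat.card_subtype_ne_zero {α : Type*} [Finite α] [Zero α] :
    Nat.card {x : α // x ≠ 0} = Nat.card α - 1 := by
  classical
  have := Fintype.ofFinite α
  simp [Nat.card_eq_fintype_card, Fintype.card_subtype_compl]

section CommRing

variable {R V : Type*} [CommRing R] [AddCommGroup V] [Module R V] {B : V →ₗ[R] V →ₗ[R] R}

theorem LinearMap.IsAlt.domRestrict (hB : B.IsAlt) (W : Submodule R V) :
    (B.domRestrict₁₂ W W).IsAlt :=
  fun x => hB.self_eq_zero x

theorem LinearMap.IsAlt.separatingLeft_domRestrict_ker_inf_ker (hB : B.IsAlt)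
    (hnd : B.SeparatingLeft) {e f : V} (hef : B e f = 1) :
    (B.domRestrict₁₂ (ker (B e) ⊓ ker (B f)) (ker (B e) ⊓ ker (B f))).SeparatingLeft := by
  have hfe : B f e = -1 := by rw [← hB.neg, hef]
  rintro ⟨x, hxW⟩ hx
  obtain ⟨hxe, hxf⟩ := Submodule.mem_inf.mp hxW
  rw [mem_ker] at hxe hxf
  rw [Submodule.mk_eq_zero]
  refine hnd x fun v => ?_
  -- `x` is orthogonal to `e` and `f`, so `B x v` only sees the projection of `v` onto `{e, f}ᗮ`
  have hw : v - B e v • f + B f v • e ∈ ker (B e) ⊓ ker (B f) := by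
    constructor <;> simp [hB.self_eq_zero, hef, hfe]
  have := hx ⟨_, hw⟩
  simp only [domRestrict₁₂_apply] at this
  simpa [hB.eq_iff.mp hxe, hB.eq_iff.mp hxf] using this

variable (B) in
def IsSymplecticFamily {n : ℕ} (v : Fin n → V × V) : Prop :=
  ∀ i j, B (v i).1 (v j).1 = 0 ∧ B (v i).2 (v j).2 = 0 ∧
    B (v i).1 (v j).2 = if i = j then 1 else 0

theorem isSymplecticFamily_cons_iff (hB : B.IsAlt) {n : ℕ} (p : V × V) (v : Fin n → V × V) :
    IsSymplecticFamily B (Fin.cons p v) ↔ B p.1 p.2 = 1 ∧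
      (∀ i, (v i).1 ∈ ker (B p.1) ⊓ ker (B p.2) ∧ (v i).2 ∈ ker (B p.1) ⊓ ker (B p.2)) ∧
      IsSymplecticFamily B v := by
  simp only [IsSymplecticFamily, Fin.forall_fin_succ, Fin.cons_zero, Fin.cons_succ,
    hB.self_eq_zero, Submodule.mem_inf, mem_ker, Fin.succ_ne_zero, (Fin.succ_ne_zero _).symm,
    Fin.succ_inj, if_true, if_false, true_and]
  simp only [hB.eq_iff (y := p.1), hB.eq_iff (y := p.2), forall_and]
  tauto

def symplecticFamilyDomRestrictEquiv (W : Submodule R V) (n : ℕ) :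
    {v : Fin n → V × V // (∀ i, (v i).1 ∈ W ∧ (v i).2 ∈ W) ∧ IsSymplecticFamily B v} ≃
      {w : Fin n → W × W // IsSymplecticFamily (B.domRestrict₁₂ W W) w} where
  toFun v := ⟨fun i => (⟨(v.1 i).1, (v.2.1 i).1⟩, ⟨(v.1 i).2, (v.2.1 i).2⟩), v.2.2⟩
  invFun w := ⟨fun i => ((w.1 i).1, (w.1 i).2), fun i => ⟨(w.1 i).1.2, (w.1 i).2.2⟩, w.2⟩

end CommRing

section Field

variable {F V : Type*} [Field F] [AddCommGroup V] [Module F V] {B : V →ₗ[F] V →ₗ[F] F}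

theorem Module.Dual.card_fiber_of_ne_zero [Finite V] {φ : Module.Dual F V} (hφ : φ ≠ 0)
    (a : F) : Nat.card {x // φ x = a} = Nat.card F ^ (finrank F V - 1) := by
  calc Nat.card {x // φ x = a}
      = Nat.card (ker φ) :=
        Nat.card_congr (φ.toAddMonoidHom.fiberEquivKerOfSurjective (LinearMap.surjective hφ) a)
    _ = _ := by
      rw [natCard_eq_pow_finrank (K := F), ← φ.finrank_ker_add_one_of_ne_zero hφ,
        Nat.add_sub_cancel]

theorem LinearMap.SeparatingLeft.card_apply_eq_one [Finite V] (hB : B.SeparatingLeft) :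
    Nat.card {p : V × V // B p.1 p.2 = 1} =
      (Nat.card F ^ finrank F V - 1) * Nat.card F ^ (finrank F V - 1) := by
  have e : {p : V × V // B p.1 p.2 = 1} ≃ {p : V × V // p.1 ≠ 0 ∧ B p.1 p.2 = 1} :=
    Equiv.subtypeEquivRight fun p =>
      ⟨fun h => ⟨by rintro h0; simp [h0] at h, h⟩, And.right⟩
  have hfiber (x : V) (hx : x ≠ 0) :
      Nat.card {y // B x y = 1} = Nat.card F ^ (finrank F V - 1) :=
    Module.Dual.card_fiber_of_ne_zero (fun h => hx (hB x fun y => by simp [h])) 1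
  rw [Nat.card_congr e, Nat.card_subtype_prod_eq_mul_of_card_fiber hfiber,
    Nat.card_subtype_ne_zero, natCard_eq_pow_finrank (K := F)]

theorem LinearMap.IsAlt.finrank_ker_inf_ker_add_two [FiniteDimensional F V] (hB : B.IsAlt)
    {e f : V} (hef : B e f = 1) :
    finrank F ↥(ker (B e) ⊓ ker (B f)) + 2 = finrank F V := by
  have hfe : B f e = -1 := by rw [← hB.neg, hef]
  have hsurj : Function.Surjective ((B e).prod (B f)) := fun ⟨a, b⟩ =>
    ⟨a • f - b • e, by simp [hB.self_eq_zero, hef, hfe]⟩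
  have := ((B e).prod (B f)).finrank_range_add_finrank_ker
  rw [range_eq_top.mpr hsurj, finrank_top, finrank_prod, finrank_self, ker_prod] at this
  omega

theorem card_isSymplecticFamily [Finite V] (hB : B.IsAlt) (hnd : B.SeparatingLeft) {n : ℕ}
    (hV : finrank F V = 2 * n) :
    Nat.card {v : Fin n → V × V // IsSymplecticFamily B v} =
      ∏ m ∈ Icc 1 n, (Nat.card F ^ (2 * m) - 1) * Nat.card F ^ (2 * m - 1) := by
  induction n generalizing V with
  | zero =>
    have : Unique {v : Fin 0 → V × V // IsSymplecticFamily B v} :=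
      ⟨⟨⟨finZeroElim, finZeroElim⟩⟩, fun v => Subtype.ext (Subsingleton.elim _ _)⟩
    simp
  | succ n ih =>
    have hfiber (p : V × V) (hp : B p.1 p.2 = 1) :
        Nat.card {v : Fin n → V × V // (∀ i, (v i).1 ∈ ker (B p.1) ⊓ ker (B p.2) ∧
          (v i).2 ∈ ker (B p.1) ⊓ ker (B p.2)) ∧ IsSymplecticFamily B v} =
        ∏ m ∈ Icc 1 n, (Nat.card F ^ (2 * m) - 1) * Nat.card F ^ (2 * m - 1) := by
      rw [Nat.card_congr (symplecticFamilyDomRestrictEquiv _ n)]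
      exact ih (hB.domRestrict _) (hB.separatingLeft_domRestrict_ker_inf_ker hnd hp)
        (by have := hB.finrank_ker_inf_ker_add_two hp; omega)
    rw [← Nat.card_congr ((Fin.consEquiv fun _ => V × V).subtypeEquiv
        fun x => (isSymplecticFamily_cons_iff hB x.1 x.2).symm),
      Nat.card_subtype_prod_eq_mul_of_card_fiber hfiber, hnd.card_apply_eq_one, hV,
      prod_Icc_succ_top (by omega), mul_comm]

end Field

section Matrix

variable {l R : Type*} [Fintype l] [DecidableEq l] [CommRing R]

variable (l R) in
def Matrix.symplecticForm : (l ⊕ l → R) →ₗ[R] (l ⊕ l → R) →ₗ[R] R :=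
  toLinearMap₂' R (J l R)

theorem Matrix.symplecticForm_apply (x y : l ⊕ l → R) :
    symplecticForm l R x y = ∑ i, x (.inr i) * y (.inl i) - ∑ i, x (.inl i) * y (.inr i) := by
  rw [symplecticForm, toLinearMap₂'_apply', ← Sum.elim_comp_inl_inr x,
    ← Sum.elim_comp_inl_inr y]
  simp [J, fromBlocks_mulVec, dotProduct, neg_mulVec, sub_eq_neg_add]

theorem Matrix.isAlt_symplecticForm : (symplecticForm l R).IsAlt := by
  intro x
  simp [symplecticForm_apply, mul_comm]

theorem Matrix.separatingLeft_symplecticForm [IsDomain R] :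
    (symplecticForm l R).SeparatingLeft :=
  separatingLeft_toLinearMap₂'_of_det_ne_zero' (isUnit_det_J l R).ne_zero

theorem Matrix.mul_J_mul_transpose_apply (A : Matrix (l ⊕ l) (l ⊕ l) R) (a b : l ⊕ l) :
    (A * J l R * Aᵀ) a b = symplecticForm l R (A a) (A b) := by
  rw [symplecticForm, toLinearMap₂'_apply', Matrix.mul_assoc, mul_apply']
  rfl

theorem Matrix.mem_symplecticGroup_iff_isSymplecticFamily {n : ℕ}
    {A : Matrix (Fin n ⊕ Fin n) (Fin n ⊕ Fin n) R} :
    A ∈ symplecticGroup (Fin n) R ↔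
      IsSymplecticFamily (symplecticForm (Fin n) R) fun i => (A (.inr i), A (.inl i)) := by
  rw [SymplecticGroup.mem_iff, ← Matrix.ext_iff]
  simp only [mul_J_mul_transpose_apply, Sum.forall, IsSymplecticFamily]
  simp only [J, fromBlocks_apply₁₁, fromBlocks_apply₁₂, fromBlocks_apply₂₁, fromBlocks_apply₂₂, zero_apply,
    neg_apply, one_apply, ← isAlt_symplecticForm.neg (A (.inr _)) (A (.inl _)), neg_inj,
    forall_and]
  exact ⟨fun ⟨⟨h₁, _⟩, h₂, h₃⟩ => ⟨h₃, h₁, h₂⟩,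
    fun ⟨h₃, h₁, h₂⟩ => ⟨⟨h₁, fun x b => by simp only [h₂, eq_comm]⟩, h₂, h₃⟩⟩

def Matrix.symplecticGroupEquivSymplecticFamily (n : ℕ) :
    symplecticGroup (Fin n) R ≃
      {v : Fin n → (Fin n ⊕ Fin n → R) × (Fin n ⊕ Fin n → R) //
        IsSymplecticFamily (symplecticForm (Fin n) R) v} where
  toFun A := ⟨fun i => (A.1 (.inr i), A.1 (.inl i)),
    mem_symplecticGroup_iff_isSymplecticFamily.mp A.2⟩
  invFun v := ⟨of (Sum.elim (fun i => (v.1 i).2) fun i => (v.1 i).1),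
    mem_symplecticGroup_iff_isSymplecticFamily.mpr v.2⟩
  left_inv A := Subtype.ext (funext fun a => by cases a <;> rfl)

end Matrix

theorem card_symplecticGroup_general (p : ℕ) (hp : p.Prime) (n : ℕ) :
    Nat.card (Matrix.symplecticGroup (Fin n) (ZMod p)) =
      ∏ m ∈ Finset.Icc 1 n, (p ^ (2 * m) - 1) * p ^ (2 * m - 1) := by
  have : Fact p.Prime := ⟨hp⟩
  have hdim : finrank (ZMod p) (Fin n ⊕ Fin n → ZMod p) = 2 * n := by
    simp [two_mul]
  rw [Nat.card_congr (symplecticGroupEquivSymplecticFamily n),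
    card_isSymplecticFamily isAlt_symplecticForm separatingLeft_symplecticForm hdim,
    Nat.card_zmod]

/-- `|Sp(2n, 𝔽_p)| = ∏_{m=1}^{n} (p^{2m} - 1)·p^{2m-1}`. -/
theorem card_symplecticGroup (p : ℕ) (hp : p.Prime) (n : ℕ) (hn : 0 < n) :
    Nat.card (Matrix.symplecticGroup (Fin n) (ZMod p)) =
      ∏ m ∈ Finset.Icc 1 n, (p ^ (2 * m) - 1) * p ^ (2 * m - 1) :=
  card_symplecticGroup_general p hp n
end

section
/- Let P ∈ SL(2,ℤ) with top row entries a, b, and set Q = P·ᵗP, M = Q·s2·Q⁻¹·s1 where s1 = [[1,0],[-1,1]], s2 = [[1,1],[0,1]]. If |trace(M)| ≤ 2 then a² + b² ≤ 2, i.e. a, b ∈ {-1,0,1}. -/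
/-!
Conjugating `s2` by `Q = [[p, q], [r, s]]` gives `[[1 - p r, p²], [-r², 1 + p r]]`, so the trace
of `Q s2 Q⁻¹ s1` is `2 - p²`. For `Q = P ᵗP` the corner entry is `p = a² + b²`, and
`|2 - p²| ≤ 2` forces `p ≤ 2`.
-/

open Matrix

def s1 : Matrix.SpecialLinearGroup (Fin 2) ℤ :=
  ⟨!![1, 0; -1, 1], by norm_num [Matrix.det_fin_two_of]⟩

def s2 : Matrix.SpecialLinearGroup (Fin 2) ℤ :=
  ⟨!![1, 1; 0, 1], by norm_num [Matrix.det_fin_two_of]⟩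

def slTranspose (P : Matrix.SpecialLinearGroup (Fin 2) ℤ) :
    Matrix.SpecialLinearGroup (Fin 2) ℤ :=
  ⟨(P : Matrix (Fin 2) (Fin 2) ℤ)ᵀ, by simp [Matrix.det_transpose]⟩

lemma trace_conj_s2_mul_s1 (Q : Matrix.SpecialLinearGroup (Fin 2) ℤ) :
    trace ((Q * s2 * Q⁻¹ * s1 : Matrix.SpecialLinearGroup (Fin 2) ℤ) : Matrix (Fin 2) (Fin 2) ℤ) =
      2 - (Q : Matrix (Fin 2) (Fin 2) ℤ) 0 0 ^ 2 := by
  have hdet := Q.property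
  rw [det_fin_two] at hdet
  simp only [Matrix.SpecialLinearGroup.coe_mul, Matrix.SpecialLinearGroup.coe_inv]
  simp only [s1, s2, adjugate_fin_two, trace_fin_two, mul_apply, Fin.sum_univ_two, of_apply,
    cons_val', cons_val_zero, cons_val_one, cons_val_fin_one, empty_val']
  linear_combination (2 : ℤ) * hdet

lemma mul_slTranspose_apply_zero_zero (P : Matrix.SpecialLinearGroup (Fin 2) ℤ) :
    ((P * slTranspose P : Matrix.SpecialLinearGroup (Fin 2) ℤ) : Matrix (Fin 2) (Fin 2) ℤ) 0 0 =
      (P : Matrix (Fin 2) (Fin 2) ℤ) 0 0 ^ 2 + (P : Matrix (Fin 2) (Fin 2) ℤ) 0 1 ^ 2 := by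
  rw [Matrix.SpecialLinearGroup.coe_mul]
  simp [slTranspose, mul_apply, Fin.sum_univ_two, sq]

lemma Int.le_two_of_abs_two_sub_sq_le_two {n : ℤ} (hn : 0 ≤ n) (h : |2 - n ^ 2| ≤ 2) : n ≤ 2 := by
  nlinarith [(abs_le.mp h).1]

lemma Int.mem_neg_one_zero_one_of_sq_le_two {a : ℤ} (h : a ^ 2 ≤ 2) :
    a ∈ ({-1, 0, 1} : Set ℤ) := by
  have : -1 ≤ a ∧ a ≤ 1 := abs_le.mp (by nlinarith [sq_abs a, abs_nonneg a])
  simp only [Set.mem_insert_iff, Set.mem_singleton_iff]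
  omega

/-- If `M = Q·s2·Q⁻¹·s1` with `Q = P·ᵗP` is non-hyperbolic (`|trace M| ≤ 2`), then
`a² + b² ≤ 2`, i.e. `a, b ∈ {-1,0,1}`. -/
theorem small_top_row_of_nonhyperbolic (P : Matrix.SpecialLinearGroup (Fin 2) ℤ)
    (a b : ℤ) (ha : (P : Matrix (Fin 2) (Fin 2) ℤ) 0 0 = a)
    (hb : (P : Matrix (Fin 2) (Fin 2) ℤ) 0 1 = b)
    (Q : Matrix.SpecialLinearGroup (Fin 2) ℤ) (hQ : Q = P * slTranspose P)
    (M : Matrix.SpecialLinearGroup (Fin 2) ℤ) (hM : M = Q * s2 * Q⁻¹ * s1)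
    (htr : |Matrix.trace ((M : Matrix (Fin 2) (Fin 2) ℤ))| ≤ 2) :
    a ^ 2 + b ^ 2 ≤ 2 ∧ a ∈ ({-1, 0, 1} : Set ℤ) ∧ b ∈ ({-1, 0, 1} : Set ℤ) := by
  rw [hM, trace_conj_s2_mul_s1, hQ, mul_slTranspose_apply_zero_zero, ha, hb] at htr
  have hsum : a ^ 2 + b ^ 2 ≤ 2 := Int.le_two_of_abs_two_sub_sq_le_two (by positivity) htr
  exact ⟨hsum, Int.mem_neg_one_zero_one_of_sq_le_two (by nlinarith [sq_nonneg b]),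
    Int.mem_neg_one_zero_one_of_sq_le_two (by nlinarith [sq_nonneg a])⟩
end
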